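/- Let ρ_{AB} = ∑_x p_x |x⟩⟨x| ⊗ ρ_x be a cq-state with ρ = ∑_x p_x ρ_x invertible, and define the conditional collision entropy H_2(ρ_{AB}|ρ) = -log₂ Tr([(I ⊗ ρ^{-1/2})ρ_{AB}]²). Then the maximal average probability of guessing x from ρ_x satisfies sup_M ∑_x p_x Tr(M_x ρ_x) ≥ 2^{-H_2(ρ_{AB}|ρ)}, where the supremum is over POVMs {M_x}; the bound is achieved by the square-root (pretty good) measurement M_x = p_x ρ^{-1/2} ρ_x ρ^{-1/2}. -/

import Mathlib

/-!
With `R = ρ^{-1/2}` we have `R ρ R = 1`, so `M_x = p_x R ρ_x R` is a POVM. Computed block by block,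
`Tr([(I ⊗ R) ρ_AB]²) = ∑_x p_x² Tr(R ρ_x R ρ_x)`, which is exactly the success probability of this
measurement. It is positive: writing `ρ_x = Q* Q`, `Tr(R ρ_x R ρ_x)` is the squared
Hilbert–Schmidt norm of the Hermitian matrix `Q R Q*`, which vanishes only if `Q = 0` since `R` is
positive definite. Hence the success probability equals `2^{-H₂}`, and since no POVM succeeds with
probability above `1`, the supremum is finite and at least this value.
-/

open scoped ComplexOrder MatrixOrder
open Matrix

namespace Matrix

section PositiveMatrices

variable {n 𝕜 : Type*} [Fintype n] [RCLike 𝕜]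

lemma PosSemidef.eigenvectorUnitary_mul_diagonal_sqrt_mul_star [DecidableEq n]
    {A : Matrix n n ℂ} (hA : A.PosSemidef) :
    (hA.1.eigenvectorUnitary : Matrix n n ℂ) *
      diagonal (fun i => ((√(hA.1.eigenvalues i) : ℝ) : ℂ)) *
      (star hA.1.eigenvectorUnitary : Matrix n n ℂ) = CFC.sqrt A := by
  rw [CFC.sqrt_eq_real_sqrt A hA.nonneg, cfcₙ_eq_cfc, hA.1.cfc_eq]
  rfl

lemma PosDef.posDef_inv_sqrt [DecidableEq n] {S : Matrix n n 𝕜} (hS : S.PosDef) :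
    (CFC.sqrt S)⁻¹.PosDef :=
  have := hS.isStrictlyPositive
  (IsStrictlyPositive.sqrt S).posDef.inv

lemma PosDef.inv_sqrt_mul_mul_inv_sqrt [DecidableEq n] {S : Matrix n n 𝕜} (hS : S.PosDef) :
    (CFC.sqrt S)⁻¹ * S * (CFC.sqrt S)⁻¹ = 1 := by
  have hdet : IsUnit (CFC.sqrt S).det := (isUnit_iff_isUnit_det _).mp <|
    (CFC.isUnit_sqrt_iff S hS.posSemidef.nonneg).mpr hS.isUnit
  nth_rw 2 [← CFC.sqrt_mul_sqrt_self S hS.posSemidef.nonneg]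
  rw [← mul_assoc, nonsing_inv_mul _ hdet, one_mul, mul_nonsing_inv _ hdet]

lemma PosSemidef.trace_mul_nonneg [DecidableEq n] {A B : Matrix n n 𝕜} (hA : A.PosSemidef)
    (hB : B.PosSemidef) : 0 ≤ (A * B).trace := by
  obtain ⟨Q, rfl⟩ := CStarAlgebra.nonneg_iff_eq_star_mul_self.mp hB.nonneg
  rw [← mul_assoc, trace_mul_comm, ← mul_assoc, star_eq_conjTranspose]
  exact (hA.mul_mul_conjTranspose_same Q).trace_nonneg

lemma PosDef.eq_zero_of_conjTranspose_mul_mul_same_eq_zero {R B : Matrix n n 𝕜} (hR : R.PosDef)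
    (h : Bᴴ * R * B = 0) : B = 0 := by
  refine ext_iff_mulVec.mpr fun v => ?_
  by_contra hv
  rw [zero_mulVec] at hv
  have hpos := hR.dotProduct_mulVec_pos hv
  rw [star_mulVec, ← dotProduct_mulVec, mulVec_mulVec, mulVec_mulVec, h, zero_mulVec,
    dotProduct_zero] at hpos
  exact hpos.false

lemma PosDef.trace_mul_mul_mul_self_pos [DecidableEq n] {R ρ : Matrix n n 𝕜} (hR : R.PosDef)
    (hρ : ρ.PosSemidef) (hρ0 : ρ ≠ 0) : 0 < (R * ρ * R * ρ).trace := by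
  obtain ⟨Q, rfl⟩ := CStarAlgebra.nonneg_iff_eq_star_mul_self.mp hρ.nonneg
  rw [star_eq_conjTranspose] at hρ0 ⊢
  have hZ : (Q * R * Qᴴ)ᴴ = Q * R * Qᴴ := by
    simpa only [conjTranspose_conjTranspose] using (isHermitian_conjTranspose_mul_mul Qᴴ hR.1).eq
  have htrace :
      (R * (Qᴴ * Q) * R * (Qᴴ * Q)).trace = ((Q * R * Qᴴ)ᴴ * (Q * R * Qᴴ)).trace := by
    rw [hZ]
    simp only [mul_assoc]
    rw [trace_mul_comm Q]
    simp only [mul_assoc]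
  have hZ0 : Q * R * Qᴴ ≠ 0 := fun h => hρ0 <| by
    rw [hR.eq_zero_of_conjTranspose_mul_mul_same_eq_zero (B := Qᴴ)
      (by rwa [conjTranspose_conjTranspose]), zero_mul]
  rw [htrace]
  exact (posSemidef_conjTranspose_mul_self _).trace_nonneg.lt_of_ne
    (Ne.symm (trace_conjTranspose_mul_self_eq_zero_iff.not.mpr hZ0))

end PositiveMatrices

lemma posSemidef_one_sub_of_sum_eq_one {ι n 𝕜 : Type*} [Fintype ι] [DecidableEq n] [RCLike 𝕜]
    {M : ι → Matrix n n 𝕜} (hM : ∀ x, (M x).PosSemidef) (hM1 : ∑ x, M x = 1) (x : ι) :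
    (1 - M x).PosSemidef := by
  classical
  rw [← hM1, ← Finset.sum_erase_eq_sub (Finset.mem_univ x)]
  exact posSemidef_sum _ fun y _ => hM y

lemma trace_sq_blockDiagonal_const_mul {ι n α : Type*} [Fintype ι] [DecidableEq ι] [Fintype n]
    [DecidableEq n] [Ring α] (A : Matrix n n α) (B : ι → Matrix n n α) :
    ((blockDiagonal (fun _ => A) * blockDiagonal B) ^ 2).trace =
      ∑ x, (A * B x * A * B x).trace := by
  rw [← blockDiagonal_mul, ← blockDiagonal_pow, trace_blockDiagonal]
  simp only [Pi.pow_apply, sq, mul_assoc]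

end Matrix

section GuessingProbability

variable {ι n : Type*} [Fintype ι] [Fintype n]

lemma re_trace_mul_le_re_trace [DecidableEq n] {M ρ : Matrix n n ℂ} (hM : (1 - M).PosSemidef)
    (hρ : ρ.PosSemidef) : (M * ρ).trace.re ≤ ρ.trace.re := by
  have h := (Complex.nonneg_iff.mp (hM.trace_mul_nonneg hρ)).1
  rwa [sub_mul, one_mul, trace_sub, Complex.sub_re, sub_nonneg] at h

lemma sum_mul_re_trace_mul_le_one [DecidableEq n] {p : ι → ℝ} (hp : ∀ x, 0 ≤ p x)
    (hp1 : ∑ x, p x = 1) {ρ : ι → Matrix n n ℂ} (hρ : ∀ x, (ρ x).PosSemidef ∧ (ρ x).trace = 1)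
    {M : ι → Matrix n n ℂ} (hM : ∀ x, (M x).PosSemidef) (hM1 : ∑ x, M x = 1) :
    ∑ x, p x * (M x * ρ x).trace.re ≤ 1 := by
  refine hp1 ▸ Finset.sum_le_sum fun x _ => mul_le_of_le_one_right (hp x) ?_
  simpa [(hρ x).2] using
    re_trace_mul_le_re_trace (posSemidef_one_sub_of_sum_eq_one hM hM1 x) (hρ x).1

lemma posSemidef_smul_mul_mul {c : ℝ} (hc : 0 ≤ c) {R ρ : Matrix n n ℂ} (hR : R.IsHermitian)
    (hρ : ρ.PosSemidef) : ((c : ℂ) • (R * ρ * R)).PosSemidef := by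
  have h := hρ.conjTranspose_mul_mul_same R
  rw [hR.eq] at h
  exact h.smul (by exact_mod_cast hc)

lemma sum_smul_mul_mul_eq {α : Type*} [CommRing α] (c : ι → α) (R : Matrix n n α)
    (ρ : ι → Matrix n n α) : ∑ x, c x • (R * ρ x * R) = R * (∑ x, c x • ρ x) * R := by
  simp only [Finset.mul_sum, Finset.sum_mul, mul_smul_comm, smul_mul_assoc]

lemma sum_mul_re_trace_smul_mul_mul_mul (p : ι → ℝ) (R : Matrix n n ℂ) (ρ : ι → Matrix n n ℂ) :
    ∑ x, p x * (((p x : ℂ) • (R * ρ x * R)) * ρ x).trace.re =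
      ∑ x, p x ^ 2 * (R * ρ x * R * ρ x).trace.re := by
  refine Finset.sum_congr rfl fun x _ => ?_
  rw [smul_mul_assoc, trace_smul, smul_eq_mul, Complex.re_ofReal_mul]
  ring

lemma re_trace_sq_blockDiagonal [DecidableEq ι] [DecidableEq n] (p : ι → ℝ) (R : Matrix n n ℂ)
    (ρ : ι → Matrix n n ℂ) :
    (((blockDiagonal fun _ => R) * blockDiagonal fun x => (p x : ℂ) • ρ x) ^ 2).trace.re =
      ∑ x, p x ^ 2 * (R * ρ x * R * ρ x).trace.re := by
  rw [trace_sq_blockDiagonal_const_mul, Complex.re_sum]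
  refine Finset.sum_congr rfl fun x _ => ?_
  simp only [mul_smul_comm, smul_mul_assoc, smul_smul]
  rw [trace_smul, smul_eq_mul, ← Complex.ofReal_mul, Complex.re_ofReal_mul, sq]

lemma sum_sq_mul_re_trace_pos [DecidableEq n] {p : ι → ℝ} (hp1 : ∑ x, p x = 1)
    {R : Matrix n n ℂ} (hR : R.PosDef) {ρ : ι → Matrix n n ℂ}
    (hρ : ∀ x, (ρ x).PosSemidef ∧ (ρ x).trace = 1) :
    0 < ∑ x, p x ^ 2 * (R * ρ x * R * ρ x).trace.re := by
  have hterm x : 0 < (R * ρ x * R * ρ x).trace.re := by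
    refine (Complex.pos_iff.mp (hR.trace_mul_mul_mul_self_pos (hρ x).1 fun h => ?_)).1
    simpa [h] using (hρ x).2
  obtain ⟨x₀, hx₀⟩ : ∃ x, p x ≠ 0 := by
    by_contra! h
    simp [h] at hp1
  exact Finset.sum_pos' (fun x _ => mul_nonneg (sq_nonneg _) (hterm x).le)
    ⟨x₀, Finset.mem_univ _, mul_pos (pow_two_pos_of_ne_zero hx₀) (hterm x₀)⟩

end GuessingProbability

/-- Pretty-good-measurement bound: for a cq-state `ρ_XE = ∑_x p_x |x⟩⟨x| ⊗ ρ_x`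
(represented as the block-diagonal matrix with blocks `p_x ρ_x`) with
`ρ = ∑_x p_x ρ_x` invertible, define the conditional collision entropy
`H₂(ρ_XE|ρ) = -log₂ Tr([(I ⊗ ρ^{-1/2}) ρ_XE]²)`.  Then the square-root (pretty good)
measurement `M_x = p_x ρ^{-1/2} ρ_x ρ^{-1/2}` is a POVM whose average success probability
equals `2^{-H₂}`, and hence the maximal average guessing probability over all POVMs is
at least `2^{-H₂}`. -/
theorem stmt_19 {d m : ℕ}
    (p : Fin m → ℝ) (hp : ∀ x, 0 ≤ p x) (hp1 : ∑ x, p x = 1)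
    (ρ : Fin m → Matrix (Fin d) (Fin d) ℂ)
    (hρ : ∀ x, (ρ x).PosSemidef ∧ (ρ x).trace = 1)
    (hpsd : (∑ x, (p x : ℂ) • ρ x).PosSemidef)
    (hinv : IsUnit (∑ x, (p x : ℂ) • ρ x))
    (R : Matrix (Fin d) (Fin d) ℂ) (hR : R = ((hpsd.1.eigenvectorUnitary : Matrix (Fin d) (Fin d) ℂ) *
      Matrix.diagonal (fun i => ((Real.sqrt (hpsd.1.eigenvalues i) : ℝ) : ℂ)) *
      (star hpsd.1.eigenvectorUnitary : Matrix (Fin d) (Fin d) ℂ))⁻¹)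
    (H₂ : ℝ)
    (hH₂ : H₂ = -Real.logb 2
      ((((Matrix.blockDiagonal fun _ : Fin m => R) *
          (Matrix.blockDiagonal fun x : Fin m => (p x : ℂ) • ρ x)) ^ 2).trace.re)) :
    (∀ x, ((p x : ℂ) • (R * ρ x * R)).PosSemidef) ∧
    (∑ x, (p x : ℂ) • (R * ρ x * R) = 1) ∧
    (∑ x, p x * ((((p x : ℂ) • (R * ρ x * R)) * ρ x).trace).re = (2 : ℝ) ^ (-H₂)) ∧
    sSup {v : ℝ | ∃ M : Fin m → Matrix (Fin d) (Fin d) ℂ,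
        (∀ x, (M x).PosSemidef) ∧ (∑ x, M x = 1) ∧
        v = ∑ x, p x * ((M x * ρ x).trace).re}
      ≥ (2 : ℝ) ^ (-H₂) := by
  have hS : (∑ x, (p x : ℂ) • ρ x).PosDef := hpsd.posDef_iff_isUnit.mpr hinv
  rw [hpsd.eigenvectorUnitary_mul_diagonal_sqrt_mul_star] at hR
  have hRdef : R.PosDef := hR ▸ hS.posDef_inv_sqrt
  have hpgm : ∀ x, ((p x : ℂ) • (R * ρ x * R)).PosSemidef :=
    fun x => posSemidef_smul_mul_mul (hp x) hRdef.1 (hρ x).1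
  have hpgm1 : ∑ x, (p x : ℂ) • (R * ρ x * R) = 1 := by
    rw [sum_smul_mul_mul_eq, hR, hS.inv_sqrt_mul_mul_inv_sqrt]
  have hsucc : ∑ x, p x * ((((p x : ℂ) • (R * ρ x * R)) * ρ x).trace).re = (2 : ℝ) ^ (-H₂) := by
    rw [hH₂, neg_neg, re_trace_sq_blockDiagonal,
      Real.rpow_logb two_pos (by norm_num) (sum_sq_mul_re_trace_pos hp1 hRdef hρ),
      sum_mul_re_trace_smul_mul_mul_mul]
  refine ⟨hpgm, hpgm1, hsucc, le_csSup ⟨1, ?_⟩ ⟨_, hpgm, hpgm1, hsucc.symm⟩⟩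
  rintro _ ⟨M, hM, hM1, rfl⟩
  exact sum_mul_re_trace_mul_le_one hp hp1 hρ hM hM1
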